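/- arXiv:1801.08707 — 10 statements merged into one kernel-verified Lean document; each statement's English description precedes it below -/
import Mathlib

section
/- If u and v are two words over A_p with val(u) = val(v), then u and v are equal up to leading zeros; i.e., there exists a word w over A_p not starting with 0 (or w = ε) such that u ∈ 0*w and v ∈ 0*w. -/
/-!
Multiplying by `q ^ u.length` turns the value of a word `u` into a natural number, so an equality
`val (a :: u) = val (b :: v)` becomes `a * Q ≡ b * Q [MOD p]` with `Q` a power of `q`.
Since `p` and `q` are coprime and `a, b < p`, the least significant digits agree, and cancelling
them reduces to the shorter words. Words of value `0` consist of zeros only, so both words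
reduce to the same word once their trailing zeros (leading zeros of the paper) are stripped.
-/

/-- Base-p/q evaluation of a word over the digit alphabet, given as a list of
digits with the least-significant digit first:
`pqVal p q [a0, a1, ..., ak] = Σ (a_i / q) * (p/q)^i`. -/
def pqVal (p q : ℕ) : List ℕ → ℚ
  | [] => 0
  | a :: u => (a : ℚ) / q + ((p : ℚ) / q) * pqVal p q u

/-- `N_{p/q}`: the set of values of words over `A_p = {0, ..., p-1}`. -/
def pqSet (p q : ℕ) : Set ℚ :=
  {x | ∃ u : List ℕ, (∀ a ∈ u, a < p) ∧ pqVal p q u = x}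

namespace List

variable {α : Type*}

theorem rdropWhile_cons_congr (p : α → Bool) (a : α) {l₁ l₂ : List α}
    (h : l₁.rdropWhile p = l₂.rdropWhile p) :
    (a :: l₁).rdropWhile p = (a :: l₂).rdropWhile p := by
  simp only [rdropWhile, reverse_inj] at h
  simp only [rdropWhile, reverse_cons, dropWhile_append, h]

theorem eq_rdropWhile_append_replicate [DecidableEq α] (a : α) (l : List α) :
    l = l.rdropWhile (· == a) ++ replicate (l.rtakeWhile (· == a)).length a := by
  conv_lhs => rw [← rdropWhile_append_rtakeWhile (p := (· == a)) (l := l)]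
  congr 1
  exact eq_replicate_iff.mpr ⟨rfl, fun b hb => by simpa using mem_rtakeWhile_imp hb⟩

theorem getLast?_rdropWhile_ne_some (p : α → Bool) (l : List α) {a : α} (ha : p a) :
    (l.rdropWhile p).getLast? ≠ some a := by
  by_cases hnil : l.rdropWhile p = []
  · simp [hnil]
  · rw [getLast?_eq_some_getLast hnil, Ne, Option.some_inj]
    exact fun h => rdropWhile_last_not p l hnil (h ▸ ha)

end List

section pqVal

variable {p q : ℕ}

theorem pqVal_nonneg (u : List ℕ) : 0 ≤ pqVal p q u := by
  induction u with
  | nil => exact le_rfl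
  | cons a u ih => simp only [pqVal]; positivity

theorem pqVal_eq_zero_iff (hp : 0 < p) (hq : 0 < q) {u : List ℕ} :
    pqVal p q u = 0 ↔ ∀ a ∈ u, a = 0 := by
  induction u with
  | nil => simp [pqVal]
  | cons a u ih =>
    have hval : 0 ≤ (p : ℚ) / q * pqVal p q u := mul_nonneg (by positivity) (pqVal_nonneg u)
    rw [pqVal, add_eq_zero_iff_of_nonneg (by positivity) hval]
    simp [hp.ne', hq.ne', ih]

theorem exists_pow_length_mul_pqVal_eq_natCast (hq : 0 < q) (u : List ℕ) :
    ∃ n : ℕ, (q : ℚ) ^ u.length * pqVal p q u = n := by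
  induction u with
  | nil => exact ⟨0, by simp [pqVal]⟩
  | cons a u ih =>
    obtain ⟨n, hn⟩ := ih
    refine ⟨a * q ^ u.length + p * n, ?_⟩
    push_cast
    rw [← hn, pqVal, List.length_cons]
    field_simp
    ring

theorem head_eq_of_pqVal_cons_eq (hq : 0 < q) (hcop : p.Coprime q) {a b : ℕ} (ha : a < p)
    (hb : b < p) {u v : List ℕ} (h : pqVal p q (a :: u) = pqVal p q (b :: v)) : a = b := by
  obtain ⟨m, hm⟩ := exists_pow_length_mul_pqVal_eq_natCast (p := p) hq u
  obtain ⟨n, hn⟩ := exists_pow_length_mul_pqVal_eq_natCast (p := p) hq v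
  set Q := q ^ (u.length + v.length)
  have hnat : a * Q + p * (q ^ v.length * m) = b * Q + p * (q ^ u.length * n) := by
    simp only [pqVal] at h
    field_simp at h
    have hrat : (a : ℚ) * q ^ (u.length + v.length) + p * (q ^ v.length * m)
        = b * q ^ (u.length + v.length) + p * (q ^ u.length * n) := by
      rw [← hm, ← hn]
      linear_combination (q : ℚ) ^ (u.length + v.length) * h
    exact_mod_cast hrat
  have hmod : a * Q ≡ b * Q [MOD p] := by
    simpa [Nat.ModEq, Nat.add_mul_mod_self_left] using congrArg (· % p) hnat
  exact (Nat.ModEq.cancel_right_of_coprime (hcop.pow_right _) hmod).eq_of_lt_of_lt ha hb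

theorem pqVal_cons_eq_pqVal_cons_iff (hq : 0 < q) (hcop : p.Coprime q) {a b : ℕ} (ha : a < p)
    (hb : b < p) {u v : List ℕ} :
    pqVal p q (a :: u) = pqVal p q (b :: v) ↔ a = b ∧ pqVal p q u = pqVal p q v := by
  refine ⟨fun h => ?_, fun ⟨hab, huv⟩ => by rw [pqVal, pqVal, hab, huv]⟩
  obtain rfl := head_eq_of_pqVal_cons_eq hq hcop ha hb h
  have hpq : (p : ℚ) / q ≠ 0 := div_ne_zero (by norm_cast; omega) (by positivity)
  exact ⟨rfl, mul_left_cancel₀ hpq (add_left_cancel h)⟩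

theorem rdropWhile_eq_of_pqVal_eq (hp : 0 < p) (hq : 0 < q) (hcop : p.Coprime q)
    {u v : List ℕ} (hu : ∀ a ∈ u, a < p) (hv : ∀ a ∈ v, a < p)
    (h : pqVal p q u = pqVal p q v) : u.rdropWhile (· == 0) = v.rdropWhile (· == 0) := by
  induction u generalizing v with
  | nil =>
    simpa using (pqVal_eq_zero_iff hp hq).mp h.symm
  | cons a u ih =>
    cases v with
    | nil =>
      simpa using (pqVal_eq_zero_iff hp hq).mp h
    | cons b v =>
      obtain ⟨rfl, huv⟩ := (pqVal_cons_eq_pqVal_cons_iff hq hcop (hu a (by simp))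
        (hv b (by simp))).mp h
      exact List.rdropWhile_cons_congr _ a
        (ih (fun x hx => hu x (by simp [hx])) (fun x hx => hv x (by simp [hx])) huv)

end pqVal

/-- words with equal value are equal up to leading zeros.  In the
least-significant-first encoding, leading zeros are trailing entries of the
list, and "w does not start with 0" means the last entry of the list is
nonzero. -/
theorem stmt_2 (p q : ℕ) (hq : 1 < q) (hpq : q < p) (hcop : Nat.Coprime p q)
    (u v : List ℕ) (hu : ∀ a ∈ u, a < p) (hv : ∀ a ∈ v, a < p)
    (h : pqVal p q u = pqVal p q v) :
    ∃ w : List ℕ, (∀ a ∈ w, a < p) ∧ (w = [] ∨ w.getLast? ≠ some 0) ∧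
      (∃ j : ℕ, u = w ++ List.replicate j 0) ∧
      (∃ k : ℕ, v = w ++ List.replicate k 0) := by
  have hw : u.rdropWhile (· == 0) = v.rdropWhile (· == 0) :=
    rdropWhile_eq_of_pqVal_eq (by omega) (by omega) hcop hu hv h
  exact ⟨u.rdropWhile (· == 0), fun a ha => hu a ((List.rdropWhile_prefix _ _).subset ha),
    Or.inr (List.getLast?_rdropWhile_ne_some _ u (beq_self_eq_true 0)),
    ⟨_, List.eq_rdropWhile_append_replicate 0 u⟩, ⟨_, hw ▸ List.eq_rdropWhile_append_replicate 0 v⟩⟩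
end

section
/- The set N_{p/q} = val(A_p*) of values of words over A_p is closed under addition: if x, y ∈ N_{p/q} then x + y ∈ N_{p/q}. -/
/-- Digitwise addition of two words. -/
def addW : List ℕ → List ℕ → List ℕ
  | [], v => v
  | u, [] => u
  | a :: u, b :: v => (a + b) :: addW u v

lemma addW_val (p q : ℕ) (u v : List ℕ) :
    pqVal p q (addW u v) = pqVal p q u + pqVal p q v := by
  induction u generalizing v with
  | nil => simp [addW, pqVal]
  | cons a u ih =>
    cases v with
    | nil => simp [addW, pqVal]
    | cons b v =>
      simp only [addW, pqVal, ih, Nat.cast_add]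
      ring

/-- Carry-normalization: replace each digit `d` (plus incoming carry) by
`d % p`, propagating carry `(d / p) * q` (since `p/q * (p/q)^i` contributes
`(p/(q*q)) * (p/q)^i * q`...). -/
def normW (p q : ℕ) (hqp : q < p) : List ℕ → ℕ → List ℕ
  | [], 0 => []
  | [], (c+1) => ((c+1) % p) :: normW p q hqp [] ((c+1) / p * q)
  | a :: u, c => ((a + c) % p) :: normW p q hqp u ((a + c) / p * q)
termination_by u c => (u.length, c)
decreasing_by
  · apply Prod.Lex.right
    have hc : 0 < c + 1 := Nat.succ_pos c
    rcases Nat.lt_or_ge (c+1) p with h | h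
    · simpa [Nat.div_eq_of_lt h] using hc
    · have h1 : 0 < (c+1) / p := Nat.div_pos h (lt_of_le_of_lt (Nat.zero_le q) hqp)
      calc (c+1) / p * q < (c+1) / p * p := by
            exact Nat.mul_lt_mul_of_pos_left hqp h1
        _ ≤ c + 1 := Nat.div_mul_le_self _ _
  · apply Prod.Lex.left
    simp

lemma normW_lt (p q : ℕ) (hqp : q < p) (u : List ℕ) (c : ℕ) :
    ∀ a ∈ normW p q hqp u c, a < p := by
  have hp : 0 < p := lt_of_le_of_lt (Nat.zero_le q) hqp
  induction u, c using normW.induct p q hqp with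
  | case1 => simp [normW]
  | case2 c ih =>
    intro a ha
    rw [normW] at ha
    rcases List.mem_cons.mp ha with h | h
    · subst h; exact Nat.mod_lt _ hp
    · exact ih a h
  | case3 a u c ih =>
    intro b hb
    rw [normW] at hb
    rcases List.mem_cons.mp hb with h' | h'
    · subst h'; exact Nat.mod_lt _ hp
    · exact ih b h'

lemma normW_val (p q : ℕ) (hqp : q < p) (hq : 0 < q) (u : List ℕ) (c : ℕ) :
    pqVal p q (normW p q hqp u c) = pqVal p q u + (c : ℚ) / q := by
  have hq0 : (q : ℚ) ≠ 0 := Nat.cast_ne_zero.mpr hq.ne'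
  induction u, c using normW.induct p q hqp with
  | case1 => simp [normW, pqVal]
  | case2 c ih =>
    rw [normW]; simp only [pqVal]; rw [ih]
    have key : (((c+1) % p : ℕ) : ℚ) + (p : ℚ) * (((c+1) / p : ℕ) : ℚ) = ((c+1 : ℕ) : ℚ) := by
      rw [← Nat.cast_mul, ← Nat.cast_add, Nat.mod_add_div]
    field_simp [pqVal]
    push_cast
    push_cast at key
    simp only [pqVal]
    linear_combination (q : ℚ) * key
  | case3 a u c ih =>
    rw [normW]; simp only [pqVal]; rw [ih]
    have key : (((a+c) % p : ℕ) : ℚ) + (p : ℚ) * (((a+c) / p : ℕ) : ℚ) = ((a+c : ℕ) : ℚ) := by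
      rw [← Nat.cast_mul, ← Nat.cast_add, Nat.mod_add_div]
    field_simp [pqVal]
    push_cast
    push_cast at key
    nlinarith [key]

/-- N_{p/q} is closed under addition. -/
theorem stmt_3 (p q : ℕ) (hq : 1 < q) (hpq : q < p) (hcop : Nat.Coprime p q)
    (x y : ℚ) (hx : x ∈ pqSet p q) (hy : y ∈ pqSet p q) :
    x + y ∈ pqSet p q := by
  obtain ⟨u, -, hu⟩ := hx
  obtain ⟨v, -, hv⟩ := hy
  refine ⟨normW p q hpq (addW u v) 0, normW_lt p q hpq _ _, ?_⟩
  rw [normW_val p q hpq (by omega) _ _, addW_val, hu, hv]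
  simp
end

section
/- Every natural number belongs to N_{p/q}; i.e., for every m ∈ ℕ there exists a word u over A_p with val(u) = m. -/
/-! Dividing `q * m` by `p` gives `q * m = p * n + a` with a digit `a < p` and, since `q < p`,
`n < m` whenever `m > 0`; so `m = a / q + (p / q) * n`, and a representation of `m` is one of
`n` with the digit `a` appended. -/

theorem zero_mem_pqSet (p q : ℕ) : (0 : ℚ) ∈ pqSet p q :=
  ⟨[], by simp, rfl⟩

theorem digit_add_mul_mem_pqSet {p q a : ℕ} {x : ℚ} (ha : a < p) (hx : x ∈ pqSet p q) :
    (a : ℚ) / q + (p : ℚ) / q * x ∈ pqSet p q := by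
  obtain ⟨u, hu, rfl⟩ := hx
  exact ⟨a :: u, List.forall_mem_cons.mpr ⟨ha, hu⟩, rfl⟩

theorem natCast_eq_mod_div_add_mul_div {p q : ℕ} (hq : q ≠ 0) (m : ℕ) :
    (m : ℚ) = ((q * m % p : ℕ) : ℚ) / q + (p : ℚ) / q * ((q * m / p : ℕ) : ℚ) := by
  have hdiv : (p : ℚ) * ((q * m / p : ℕ) : ℚ) + ((q * m % p : ℕ) : ℚ) = q * m := by
    exact_mod_cast Nat.div_add_mod (q * m) p
  field_simp
  linarith

theorem natCast_mem_pqSet_of_div_mem {p q m : ℕ} (hp : 0 < p) (hq : q ≠ 0)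
    (h : ((q * m / p : ℕ) : ℚ) ∈ pqSet p q) : (m : ℚ) ∈ pqSet p q := by
  rw [natCast_eq_mod_div_add_mul_div hq m]
  exact digit_add_mul_mem_pqSet (Nat.mod_lt _ hp) h

theorem mul_div_lt_self {p q m : ℕ} (hqp : q < p) (hm : 0 < m) : q * m / p < m :=
  Nat.div_lt_of_lt_mul (Nat.mul_lt_mul_of_pos_right hqp hm)

theorem stmt_4_general (p q : ℕ) (hq : 1 < q) (hpq : q < p)
    (m : ℕ) :
    (m : ℚ) ∈ pqSet p q := by
  induction m using Nat.strong_induction_on with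
  | _ m ih =>
    rcases Nat.eq_zero_or_pos m with rfl | hm
    · simpa using zero_mem_pqSet p q
    · exact natCast_mem_pqSet_of_div_mem (by omega) (by omega) (ih _ (mul_div_lt_self hpq hm))

/-- every natural number belongs to N_{p/q}. -/
theorem stmt_4 (p q : ℕ) (hq : 1 < q) (hpq : q < p) (hcop : Nat.Coprime p q)
    (m : ℕ) :
    (m : ℚ) ∈ pqSet p q :=
  stmt_4_general p q hq hpq m
end

section
/- The language 0*L_{p/q} of base-p/q expansions of natural numbers is prefix-closed: if val(u·w) ∈ ℕ for words u, w over A_p, then val(u) ∈ ℕ. -/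
/-! Clearing denominators, `q ^ |u| * val u` is a natural number `m`, and for a word `a :: l`
with natural value `N` this gives `a q^k + p m = N q^(k+1)`, where `k = |l|`. Hence `q^k ∣ p m`,
and since `p` and `q` are coprime, `q^k ∣ m`, i.e. `val l = m / q^k` is a natural number.
Removing the least significant digits one at a time yields the claim. -/

section

variable {p q : ℕ}

lemma pqVal_cons_mul_pow (hq : q ≠ 0) (a : ℕ) (l : List ℕ) :
    pqVal p q (a :: l) * (q : ℚ) ^ (l.length + 1) =
      a * (q : ℚ) ^ l.length + p * (pqVal p q l * (q : ℚ) ^ l.length) := by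
  have hq' : (q : ℚ) ≠ 0 := Nat.cast_ne_zero.mpr hq
  simp only [pqVal]
  field_simp
  ring

lemma exists_pqVal_mul_pow_eq_natCast (hq : q ≠ 0) :
    ∀ u : List ℕ, ∃ m : ℕ, pqVal p q u * (q : ℚ) ^ u.length = m
  | [] => ⟨0, by simp [pqVal]⟩
  | a :: l => by
    obtain ⟨m, hm⟩ := exists_pqVal_mul_pow_eq_natCast hq l
    refine ⟨a * q ^ l.length + p * m, ?_⟩
    rw [List.length_cons, pqVal_cons_mul_pow hq, hm]
    push_cast
    ring

lemma exists_pqVal_eq_natCast_of_cons (hq : q ≠ 0) (hcop : p.Coprime q) {a : ℕ} {l : List ℕ}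
    {N : ℕ} (hN : pqVal p q (a :: l) = N) : ∃ M : ℕ, pqVal p q l = M := by
  obtain ⟨m, hm⟩ := exists_pqVal_mul_pow_eq_natCast (p := p) hq l
  set k := l.length
  have hlin : a * q ^ k + p * m = N * q ^ (k + 1) := by
    have := pqVal_cons_mul_pow (p := p) hq a l
    rw [hN, hm] at this
    exact_mod_cast this.symm
  have hpm : q ^ k ∣ p * m := by
    refine (Nat.dvd_add_right (dvd_mul_left _ a)).mp ?_
    rw [hlin]
    exact dvd_mul_of_dvd_right (pow_dvd_pow q k.le_succ) N
  obtain ⟨M, rfl⟩ := (hcop.symm.pow_left k).dvd_of_dvd_mul_left hpm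
  refine ⟨M, mul_right_cancel₀ (pow_ne_zero k (Nat.cast_ne_zero.mpr hq)) ?_⟩
  rw [hm]
  push_cast
  ring

lemma exists_pqVal_eq_natCast_of_append (hq : q ≠ 0) (hcop : p.Coprime q) (u : List ℕ) :
    ∀ w : List ℕ, (∃ N : ℕ, pqVal p q (w ++ u) = N) → ∃ M : ℕ, pqVal p q u = M
  | [], h => h
  | _ :: t, ⟨_, hN⟩ =>
    exists_pqVal_eq_natCast_of_append hq hcop u t (exists_pqVal_eq_natCast_of_cons hq hcop hN)

end

/-- In the least-significant-first encoding, the word `u·w` is `w ++ u`. -/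
theorem stmt_7_general (p q : ℕ) (hq : 1 < q) (hcop : Nat.Coprime p q)
    (u w : List ℕ)
    (h : ∃ N : ℕ, pqVal p q (w ++ u) = (N : ℚ)) :
    ∃ M : ℕ, pqVal p q u = (M : ℚ) :=
  exists_pqVal_eq_natCast_of_append (by omega) hcop u w h

/-- prefix-closure of expansions of naturals: if val(u·w) ∈ ℕ
then val(u) ∈ ℕ.  In the least-significant-first encoding u·w is `w ++ u`. -/
theorem stmt_7 (p q : ℕ) (hq : 1 < q) (hpq : q < p) (hcop : Nat.Coprime p q)
    (u w : List ℕ) (hu : ∀ a ∈ u, a < p) (hw : ∀ a ∈ w, a < p)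
    (h : ∃ N : ℕ, pqVal p q (w ++ u) = (N : ℚ)) :
    ∃ M : ℕ, pqVal p q u = (M : ℚ) :=
  stmt_7_general p q hq hcop u w h
end

section
/- Let x be a positive element of N_{p/q} with representation rep(x) = u·a·0^i where a ≠ 0. Then x·(p/q)^{-i} ∈ N_{p/q}, but x·(p/q)^{-(i+1)} ∉ N_{p/q}. Consequently V_{p/q}(x) = (p/q)^i, where V_{p/q}(x) is defined as the largest power (p/q)^j of p/q such that x·(p/q)^{-j} ∈ N_{p/q}. -/
def pqNum (p q : ℕ) : List ℕ → ℕ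
  | [] => 0
  | a :: u => a * q ^ u.length + p * pqNum p q u

lemma pqVal_eq_num (p q : ℕ) (hq : 0 < q) (w : List ℕ) :
    pqVal p q w = (pqNum p q w : ℚ) / (q : ℚ) ^ w.length := by
  induction w with
  | nil => simp [pqVal, pqNum]
  | cons a u ih =>
    have hq0 : (q : ℚ) ≠ 0 := by positivity
    simp only [pqVal, pqNum, ih, List.length_cons]
    push_cast
    field_simp
    ring

lemma pqVal_replicate (p q : ℕ) (i : ℕ) (w : List ℕ) :
    pqVal p q (List.replicate i 0 ++ w) = ((p : ℚ) / q) ^ i * pqVal p q w := by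
  induction i with
  | zero => simp
  | succ n ih => simp [List.replicate_succ, pqVal, ih]; ring

lemma pqSet_mul (p q : ℕ) (hp : 0 < p) {y : ℚ} (hy : y ∈ pqSet p q) :
    ((p : ℚ) / q) * y ∈ pqSet p q := by
  obtain ⟨w, hw, hwv⟩ := hy
  exact ⟨0 :: w, by simpa [hp] using hw, by simp [pqVal, hwv]⟩

lemma pqSet_mul_pow (p q : ℕ) (hp : 0 < p) {y : ℚ} (hy : y ∈ pqSet p q) (k : ℕ) :
    ((p : ℚ) / q) ^ k * y ∈ pqSet p q := by
  induction k with
  | zero => simpa using hy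
  | succ n ih => rw [pow_succ, mul_comm (_^n), mul_assoc]; exact pqSet_mul p q hp ih

/-- if rep(x) = u·a·0^i with a ≠ 0 (so, least-significant first,
the representation is `0^i ++ a :: u`), then x·(p/q)^{-i} ∈ N_{p/q},
x·(p/q)^{-(i+1)} ∉ N_{p/q}, and (p/q)^i is the largest power (p/q)^j of p/q
such that x·(p/q)^{-j} ∈ N_{p/q} (i.e. V_{p/q}(x) = (p/q)^i). -/
theorem stmt_8 (p q : ℕ) (hq : 1 < q) (hpq : q < p) (hcop : Nat.Coprime p q)
    (x : ℚ) (hxpos : 0 < x) (i : ℕ) (a : ℕ) (u : List ℕ)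
    (ha : a ≠ 0) (hap : a < p) (hu : ∀ b ∈ u, b < p)
    (hrep : pqVal p q (List.replicate i 0 ++ a :: u) = x) :
    x / ((p : ℚ) / q) ^ i ∈ pqSet p q ∧
      x / ((p : ℚ) / q) ^ (i + 1) ∉ pqSet p q ∧
      IsGreatest {y : ℚ | ∃ j : ℕ, y = ((p : ℚ) / q) ^ j ∧ x / y ∈ pqSet p q}
        (((p : ℚ) / q) ^ i) := by
  have hq0 : 0 < q := by omega
  have hp0 : 0 < p := by omega
  have hqQ : (0:ℚ) < q := by exact_mod_cast hq0
  have hpQ : (0:ℚ) < p := by exact_mod_cast hp0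
  have hr : (0:ℚ) < (p:ℚ)/q := by positivity
  have hr1 : (1:ℚ) < (p:ℚ)/q := by
    rw [lt_div_iff₀ hqQ]; push_cast; exact_mod_cast by linarith [hpq]
  have hrep' : ((p:ℚ)/q)^i * pqVal p q (a :: u) = x := by
    rw [← pqVal_replicate]; exact hrep
  have hxdiv : x / ((p:ℚ)/q)^i = pqVal p q (a :: u) := by
    rw [← hrep']; field_simp
  have hmem : x / ((p:ℚ)/q)^i ∈ pqSet p q := by
    rw [hxdiv]
    refine ⟨a :: u, ?_, rfl⟩
    intro b hb
    rcases List.mem_cons.1 hb with h | h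
    · omega
    · exact hu b h
  have hnot : x / ((p:ℚ)/q)^(i+1) ∉ pqSet p q := by
    rintro ⟨w, hw, hwv⟩
    -- pqVal (0 :: w) = pqVal (a :: u)
    have hkey : pqVal p q (0 :: w) = pqVal p q (a :: u) := by
      have h1 : pqVal p q (0 :: w) = ((p:ℚ)/q) * pqVal p q w := by simp [pqVal]
      rw [h1, hwv, ← hxdiv, pow_succ]
      field_simp
    rw [pqVal_eq_num p q hq0, pqVal_eq_num p q hq0] at hkey
    have hqpow : ∀ n : ℕ, ((q:ℚ))^n ≠ 0 := fun n => by positivity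
    have hcross : (pqNum p q (0 :: w)) * q ^ (a :: u).length
        = (pqNum p q (a :: u)) * q ^ (0 :: w).length := by
      have := (div_eq_div_iff (hqpow _) (hqpow _)).1 hkey
      exact_mod_cast this
    have hdvd : p ∣ pqNum p q (a :: u) * q ^ (0 :: w).length := by
      rw [← hcross]
      show p ∣ (0 * q ^ w.length + p * pqNum p q w) * _
      simp [Dvd.dvd.mul_right, dvd_mul_right]
    have hdvd2 : p ∣ pqNum p q (a :: u) :=
      (Nat.Coprime.dvd_of_dvd_mul_right (Nat.Coprime.pow_right _ hcop) hdvd)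
    have hdvd3 : p ∣ a * q ^ u.length := by
      have h := hdvd2
      rw [show pqNum p q (a :: u) = a * q ^ u.length + p * pqNum p q u from rfl] at h
      exact (Nat.dvd_add_iff_left (dvd_mul_right p _)).2 h
    have : p ∣ a := Nat.Coprime.dvd_of_dvd_mul_right (Nat.Coprime.pow_right _ hcop) hdvd3
    have := Nat.le_of_dvd (Nat.pos_of_ne_zero ha) this
    omega
  refine ⟨hmem, hnot, ⟨⟨i, rfl, hmem⟩, ?_⟩⟩
  rintro y ⟨j, rfl, hj⟩
  by_contra hle
  push_neg at hle
  have hji : i + 1 ≤ j := by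
    by_contra h
    exact absurd (pow_le_pow_right₀ (le_of_lt hr1) (by omega : j ≤ i)) (not_le.2 hle)
  apply hnot
  have := pqSet_mul_pow p q hp0 hj (j - (i+1))
  have hpow : ((p:ℚ)/q)^j = ((p:ℚ)/q)^(i+1) * ((p:ℚ)/q)^(j-(i+1)) := by
    rw [← pow_add]; congr 1; omega
  have heq : ((p:ℚ)/q) ^ (j - (i+1)) * (x / ((p:ℚ)/q) ^ j) = x / ((p:ℚ)/q)^(i+1) := by
    rw [hpow]
    have h1 : ((p:ℚ)/q)^(i+1) ≠ 0 := by positivity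
    have h2 : ((p:ℚ)/q)^(j-(i+1)) ≠ 0 := by positivity
    field_simp
  rwa [heq] at this
end

section
/- For every natural number k there is a bound m_k (one may take m_k = (pq)^{k-1}) such that for every integer n > m_k, the rational n/q^k belongs to N_{p/q}. -/
lemma natMem (p q : ℕ) (hq : 1 < q) (hpq : q < p) (n : ℕ) :
    ((n : ℚ)) ∈ pqSet p q := by
  induction n using Nat.strong_induction_on with
  | _ n ih =>
    rcases Nat.eq_zero_or_pos n with h0 | h0
    · exact ⟨[], by simp, by simp [h0, pqVal]⟩
    · have hp : 0 < p := by omega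
      set a0 := (n * q) % p with ha0
      set n' := (n * q) / p with hn'
      have ha : a0 < p := Nat.mod_lt _ hp
      have hlt : n' < n := by
        rw [hn']
        apply Nat.div_lt_of_lt_mul
        rw [Nat.mul_comm p n]
        exact Nat.mul_lt_mul_of_pos_left hpq h0
      obtain ⟨u, hu, hval⟩ := ih n' hlt
      refine ⟨a0 :: u, ?_, ?_⟩
      · intro a ha'
        rcases List.mem_cons.mp ha' with h | h
        · omega
        · exact hu a h
      · have key : a0 + p * n' = n * q := by
          rw [ha0, hn', Nat.add_comm]
          exact Nat.div_add_mod (n * q) p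
      -- pqVal (a0 :: u) = a0/q + (p/q) * n'
        have hq0 : (q : ℚ) ≠ 0 := by positivity
        show (a0 : ℚ) / q + ((p : ℚ)/q) * pqVal p q u = n
        rw [hval]
        field_simp
        have := congrArg (fun m : ℕ => (m : ℚ)) key
        push_cast at this ⊢
        linarith

/-- for every k there is a bound m_k such that n/q^k ∈ N_{p/q}
for every n > m_k. -/
theorem stmt_9 (p q : ℕ) (hq : 1 < q) (hpq : q < p) (hcop : Nat.Coprime p q)
    (k : ℕ) :
    ∃ m : ℕ, ∀ n : ℕ, m < n → (n : ℚ) / (q : ℚ) ^ k ∈ pqSet p q := by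
  induction k with
  | zero =>
    exact ⟨0, fun n _ => by simpa using natMem p q hq hpq n⟩
  | succ k ih =>
    obtain ⟨m, hm⟩ := ih
    have hp : 0 < p := by omega
    haveI : NeZero p := ⟨by omega⟩
    refine ⟨p * m + p * q ^ k, fun n hn => ?_⟩
    -- choose digit a0 with a0 * q^k ≡ n [MOD p]
    have hqu : IsUnit ((q : ZMod p) ^ k) := by
      apply IsUnit.pow
      exact (ZMod.isUnit_iff_coprime q p).mpr hcop.symm
    set a0 := (((n : ZMod p)) * ((q : ZMod p) ^ k)⁻¹).val with ha0
    have ha : a0 < p := ZMod.val_lt _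
    have hmod : ((a0 * q ^ k : ℕ) : ZMod p) = (n : ZMod p) := by
      push_cast [ha0]
      rw [ZMod.natCast_val, ZMod.cast_id]
      rw [mul_assoc, ZMod.inv_mul_of_unit _ hqu, mul_one]
    have hcong : a0 * q ^ k ≡ n [MOD p] := (ZMod.natCast_eq_natCast_iff _ _ _).mp hmod
    have hQ : 0 < q ^ k := pow_pos (by omega) k
    have hle : a0 * q ^ k ≤ n := by
      have h1 : a0 * q ^ k < p * q ^ k := Nat.mul_lt_mul_of_lt_of_le ha (le_refl _) hQ
      omega
    have hdvd : p ∣ n - a0 * q ^ k := (Nat.modEq_iff_dvd' hle).mp hcong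
    set n' := (n - a0 * q ^ k) / p with hn'
    have hsplit : n = a0 * q ^ k + p * n' := by
      have h : p * n' = n - a0 * q ^ k := by
        rw [hn', Nat.mul_div_cancel' hdvd]
      omega
    have hn'm : m < n' := by
      have h1 : a0 * q ^ k < p * q ^ k := Nat.mul_lt_mul_of_lt_of_le ha (le_refl _) hQ
      have h2 : p * m < p * n' := by omega
      exact Nat.lt_of_mul_lt_mul_left h2
    obtain ⟨u, hu, hval⟩ := hm n' hn'm
    refine ⟨a0 :: u, ?_, ?_⟩
    · intro a ha'
      rcases List.mem_cons.mp ha' with h | h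
      · omega
      · exact hu a h
    · show (a0 : ℚ) / q + ((p : ℚ)/q) * pqVal p q u = (n : ℚ) / (q : ℚ) ^ (k + 1)
      rw [hval]
      have hq0 : (q : ℚ) ≠ 0 := by positivity
      have h2 : (n : ℚ) = a0 * q ^ k + p * n' := by
        have := congrArg (fun m : ℕ => (m : ℚ)) hsplit
        push_cast at this
        linarith
      rw [h2]
      field_simp
      ring
end

section
/- For all rational numbers α, β with 0 ≤ α < β, there exist x, y ∈ N_{p/q} such that α < x − y < β. -/
/-!
Prepending a least significant digit `a` to a word turns its value `x` into `a/q + (p/q) x`, so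
the difference set `N_{p/q} - N_{p/q}` is closed under `d ↦ a/q + (p/q) d` for every digit `a`,
and under negation. Since `q < p`, writing `n = (n mod p) + p ⌊n/p⌋` reduces `n/q` to the strictly
smaller numerator `q ⌊n/p⌋`, so every `n/q`, hence every integer, is a difference. Since `q` is
invertible modulo `p`, a suitable digit `d` makes `c - d q^k` divisible by `p`, which reduces
`c/q^(k+1)` to a numerator over `q^k`. Thus the difference set contains every `c/q^k`, and these
are dense in `ℚ`.
-/

open scoped Pointwise

theorem exists_intCast_div_pow_mem_Ioo {K : Type*} [Field K] [LinearOrder K]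
    [IsStrictOrderedRing K] [FloorRing K] {r : K} (hr : 1 < r) {α β : K} (hαβ : α < β) :
    ∃ (k : ℕ) (c : ℤ), α < c / r ^ k ∧ c / r ^ k < β := by
  have : Archimedean K := FloorRing.archimedean K
  obtain ⟨k, hk⟩ := pow_unbounded_of_one_lt (β - α)⁻¹ hr
  have hrk : 0 < r ^ k := by positivity
  have hgap : 1 < r ^ k * (β - α) := by
    rwa [inv_lt_iff_one_lt_mul₀ (sub_pos.mpr hαβ)] at hk
  refine ⟨k, ⌊α * r ^ k⌋ + 1, ?_, ?_⟩
  · rw [lt_div_iff₀ hrk]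
    exact_mod_cast Int.lt_floor_add_one (α * r ^ k)
  · rw [div_lt_iff₀ hrk]
    push_cast
    linarith [Int.floor_le (α * r ^ k)]

theorem Int.exists_natCast_mul_modEq {m p : ℕ} (hp : 0 < p) (hcop : Nat.Coprime m p) (c : ℤ) :
    ∃ d : ℕ, d < p ∧ (d * m : ℤ) ≡ c [ZMOD p] := by
  obtain ⟨y, hy⟩ := Int.mod_coprime hcop
  obtain ⟨d, hdp, hd⟩ := Int.existsUnique_equiv_nat (c * y) (Int.natCast_pos.mpr hp)
  refine ⟨d, Int.ofNat_lt.mp hdp, ?_⟩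
  calc (d * m : ℤ) ≡ c * y * m [ZMOD p] := hd.mul_right _
    _ = c * (m * y) := by ring
    _ ≡ c * 1 [ZMOD p] := hy.mul_left _
    _ = c := mul_one c

section pqSet

variable {p q : ℕ}

theorem zero_mem_pqSet_sub : (0 : ℚ) ∈ pqSet p q - pqSet p q :=
  ⟨0, ⟨[], by simp, rfl⟩, 0, ⟨[], by simp, rfl⟩, sub_self 0⟩

theorem neg_mem_pqSet_sub {d : ℚ} (hd : d ∈ pqSet p q - pqSet p q) :
    -d ∈ pqSet p q - pqSet p q := by
  obtain ⟨x, hx, y, hy, rfl⟩ := hd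
  exact ⟨y, hy, x, hx, (neg_sub x y).symm⟩

theorem digit_add_mem_pqSet_sub {d : ℚ} (hd : d ∈ pqSet p q - pqSet p q) {a : ℕ} (ha : a < p) :
    (a : ℚ) / q + p / q * d ∈ pqSet p q - pqSet p q := by
  obtain ⟨_, ⟨u, hu, rfl⟩, _, ⟨w, hw, rfl⟩, rfl⟩ := hd
  refine ⟨_, ⟨a :: u, ?_, rfl⟩, _, ⟨0 :: w, ?_, rfl⟩, ?_⟩
  · simpa [ha] using hu
  · simpa [ha.pos] using hw
  · simp only [pqVal, Nat.cast_zero, zero_div, zero_add]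
    ring

theorem natCast_div_mem_pqSet_sub (hq : 0 < q) (hpq : q < p) (n : ℕ) :
    (n : ℚ) / q ∈ pqSet p q - pqSet p q := by
  induction n using Nat.strong_induction_on with
  | _ n ih =>
    have hp : 0 < p := hq.trans hpq
    have hquot : ((n / p : ℕ) : ℚ) ∈ pqSet p q - pqSet p q := by
      rcases Nat.eq_zero_or_pos (n / p) with h | h
      · simpa [h] using zero_mem_pqSet_sub
      · have hlt : q * (n / p) < n :=
          (Nat.mul_lt_mul_of_pos_right hpq h).trans_le (Nat.mul_div_le n p)
        have := ih _ hlt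
        rwa [Nat.cast_mul, mul_div_cancel_left₀ _ (by positivity)] at this
    convert digit_add_mem_pqSet_sub hquot (Nat.mod_lt n hp) using 1
    field_simp
    exact_mod_cast (Nat.mod_add_div n p).symm

theorem intCast_div_mem_pqSet_sub (hq : 0 < q) (hpq : q < p) (c : ℤ) :
    (c : ℚ) / q ∈ pqSet p q - pqSet p q := by
  obtain ⟨n, rfl | rfl⟩ := c.eq_nat_or_neg
  · simpa using natCast_div_mem_pqSet_sub hq hpq n
  · simpa [neg_div] using neg_mem_pqSet_sub (natCast_div_mem_pqSet_sub hq hpq n)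

theorem intCast_div_pow_mem_pqSet_sub (hq : 0 < q) (hpq : q < p) (hcop : Nat.Coprime p q)
    (k : ℕ) (c : ℤ) : (c : ℚ) / q ^ k ∈ pqSet p q - pqSet p q := by
  induction k generalizing c with
  | zero =>
    simpa [mul_div_cancel_right₀ _ (show (q : ℚ) ≠ 0 by positivity)] using
      intCast_div_mem_pqSet_sub hq hpq (c * q)
  | succ k ih =>
    obtain ⟨d, hdp, hd⟩ :=
      Int.exists_natCast_mul_modEq (hq.trans hpq) (hcop.symm.pow_left k) c
    obtain ⟨c', hc'⟩ := hd.dvd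
    convert digit_add_mem_pqSet_sub (ih c') hdp using 1
    have hc'ℚ : (c : ℚ) = d * q ^ k + p * c' := by
      push_cast at hc'
      exact_mod_cast (by linear_combination hc' : c = d * q ^ k + p * c')
    rw [hc'ℚ]
    field_simp
    ring

end pqSet

theorem stmt_10_general (p q : ℕ) (hq : 1 < q) (hpq : q < p) (hcop : Nat.Coprime p q)
    (α β : ℚ) (hαβ : α < β) :
    ∃ x ∈ pqSet p q, ∃ y ∈ pqSet p q, α < x - y ∧ x - y < β := by
  obtain ⟨k, c, hlo, hhi⟩ := exists_intCast_div_pow_mem_Ioo (Nat.one_lt_cast.mpr hq) hαβ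
  obtain ⟨x, hx, y, hy, hxy⟩ :=
    Set.mem_sub.mp (intCast_div_pow_mem_pqSet_sub (by omega) hpq hcop k c)
  exact ⟨x, hx, y, hy, hxy ▸ hlo, hxy ▸ hhi⟩

/-- for all rationals 0 ≤ α < β there are x, y ∈ N_{p/q} with
α < x − y < β. -/
theorem stmt_10 (p q : ℕ) (hq : 1 < q) (hpq : q < p) (hcop : Nat.Coprime p q)
    (α β : ℚ) (hα : 0 ≤ α) (hαβ : α < β) :
    ∃ x ∈ pqSet p q, ∃ y ∈ pqSet p q, α < x - y ∧ x - y < β :=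
  stmt_10_general p q hq hpq hcop α β hαβ
end

section
/- The language L = { (v,w) ∈ (A_p × A_p)* : val(v) < val(w) } of pairs of equal-length words whose first component evaluates to a smaller value than the second is not a regular language. -/
/-- Signed-digit evaluation, auxiliary. -/
def pqD (p q : ℕ) : List ℤ → ℚ
  | [] => 0
  | c :: u => (c : ℚ) / q + ((p : ℚ) / q) * pqD p q u

lemma pqVal_append (p q : ℕ) (u v : List ℕ) :
    pqVal p q (u ++ v) = pqVal p q u + ((p : ℚ) / q) ^ u.length * pqVal p q v := by
  induction u with
  | nil => simp [pqVal]
  | cons a u ih => simp [pqVal, ih, pow_succ]; ring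

lemma pqVal_replicate_zero (p q n : ℕ) : pqVal p q (List.replicate n 0) = 0 := by
  induction n with
  | zero => simp [pqVal]
  | succ n ih => simp [List.replicate_succ, pqVal, ih]

lemma exists_digits (p q : ℕ) (hq : 1 < q) (hpq : q < p) (hcop : Nat.Coprime p q) :
    ∀ k : ℕ, ∀ B : ℤ, B.natAbs < q ^ k →
      ∃ c : List ℤ, c.length = k ∧ (∀ x ∈ c, x.natAbs < p) ∧
        pqD p q c = (B : ℚ) / (q : ℚ) ^ k := by
  intro k
  induction k with
  | zero =>
    intro B hB
    have hB0 : B = 0 := by simp at hB; omega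
    exact ⟨[], rfl, by simp, by simp [pqD, hB0]⟩
  | succ k ih =>
    intro B hB
    have hp0 : (0:ℤ) < (p:ℤ) := by exact_mod_cast (by omega : 0 < p)
    have hq0 : (0:ℤ) < (q:ℤ) := by exact_mod_cast (by omega : 0 < q)
    have hQ : (0:ℤ) < (q:ℤ)^k := by positivity
    have hqp : (q:ℤ) < (p:ℤ) := by exact_mod_cast hpq
    have habsB : |B| < (q:ℤ) * (q:ℤ)^k := by
      have h1 : ((B.natAbs : ℤ)) < (((q ^ (k+1) : ℕ)) : ℤ) := by exact_mod_cast hB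
      push_cast at h1
      calc |B| < (q:ℤ)^(k+1) := h1
        _ = (q:ℤ) * (q:ℤ)^k := by ring
    -- coprimality
    have hco : IsCoprime ((q:ℤ)^k) ((p:ℤ)) :=
      (Nat.isCoprime_iff_coprime.mpr hcop.symm).pow_left
    obtain ⟨x, y, hxy⟩ := hco
    set s : ℤ := (B * x) % p with hs_def
    have hs0 : 0 ≤ s := Int.emod_nonneg _ (by exact_mod_cast (by omega : p ≠ 0))
    have hsp : s < p := Int.emod_lt_of_pos _ hp0
    have hs : s = B * x - (p:ℤ) * ((B * x) / p) := by rw [hs_def, Int.emod_def]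
    have hdvd : (p:ℤ) ∣ B - s * (q:ℤ)^k := by
      refine ⟨B * y + ((B * x) / p) * (q:ℤ)^k, ?_⟩
      linear_combination (-(q:ℤ)^k) * hs - B * hxy
    set c0 : ℤ := if s = 0 then 0 else if s * (q:ℤ)^k ≤ B then s else s - p with hc0
    have h1 : c0.natAbs < p := by
      rw [hc0]; split_ifs <;> omega
    have h2 : (p:ℤ) ∣ B - c0 * (q:ℤ)^k := by
      rw [hc0]; split_ifs with e1 e2
      · simpa [e1] using hdvd
      · exact hdvd
      · have : B - (s - p) * (q:ℤ)^k = (B - s * (q:ℤ)^k) + (p:ℤ) * (q:ℤ)^k := by ring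
        rw [this]; exact dvd_add hdvd ⟨(q:ℤ)^k, rfl⟩
    have habs := abs_lt.mp habsB
    have hx1 : (q:ℤ) * (q:ℤ)^k < (p:ℤ) * (q:ℤ)^k := mul_lt_mul_of_pos_right hqp hQ
    have hx2 : s * (q:ℤ)^k < (p:ℤ) * (q:ℤ)^k := mul_lt_mul_of_pos_right hsp hQ
    have hx3 : 0 ≤ s * (q:ℤ)^k := mul_nonneg hs0 hQ.le
    have hlo : -((p:ℤ) * (q:ℤ)^k) < B - c0 * (q:ℤ)^k := by
      rw [hc0]; split_ifs with e1 e2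
      · simp only [zero_mul, sub_zero]; linarith
      · linarith
      · have : (s - p) * (q:ℤ)^k = s * (q:ℤ)^k - (p:ℤ) * (q:ℤ)^k := by ring
        rw [this]; linarith
    have hhi : B - c0 * (q:ℤ)^k < (p:ℤ) * (q:ℤ)^k := by
      rw [hc0]; split_ifs with e1 e2
      · simp only [zero_mul, sub_zero]; linarith
      · linarith
      · push_neg at e2
        have : (s - p) * (q:ℤ)^k = s * (q:ℤ)^k - (p:ℤ) * (q:ℤ)^k := by ring
        rw [this]; linarith
    set B' : ℤ := (B - c0 * (q:ℤ)^k) / p with hB'def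
    have h5 : (p:ℤ) * B' = B - c0 * (q:ℤ)^k := Int.mul_ediv_cancel' h2
    have hB'lo : -((q:ℤ)^k) < B' := by
      by_contra hcon
      push_neg at hcon
      have : (p:ℤ) * B' ≤ (p:ℤ) * (-((q:ℤ)^k)) := mul_le_mul_of_nonneg_left hcon hp0.le
      rw [h5] at this; nlinarith
    have hB'hi : B' < (q:ℤ)^k := by
      by_contra hcon
      push_neg at hcon
      have : (p:ℤ) * ((q:ℤ)^k) ≤ (p:ℤ) * B' := mul_le_mul_of_nonneg_left hcon hp0.le
      rw [h5] at this; linarith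
    have hB'abs : B'.natAbs < q ^ k := by
      have : ((B'.natAbs : ℤ)) < (((q ^ k : ℕ)) : ℤ) := by
        rw [← Int.abs_eq_natAbs]; push_cast
        exact abs_lt.mpr ⟨hB'lo, hB'hi⟩
      exact_mod_cast this
    obtain ⟨c', hlen, hdig, hval⟩ := ih B' hB'abs
    refine ⟨c0 :: c', by simp [hlen], ?_, ?_⟩
    · intro z hz
      rcases List.mem_cons.mp hz with h | h
      · rw [h]; exact h1
      · exact hdig z h
    · have hBeq : (c0:ℚ) * (q:ℚ)^k + (p:ℚ) * (B':ℚ) = (B:ℚ) := by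
        exact_mod_cast congrArg (fun z : ℤ => (z : ℚ)) (by linarith [h5] : c0 * (q:ℤ)^k + (p:ℤ) * B' = B)
      have hqQ : ((q:ℚ)) ≠ 0 := by positivity
      show (c0 : ℚ) / q + ((p : ℚ) / q) * pqD p q c' = (B : ℚ) / (q : ℚ) ^ (k+1)
      rw [hval]
      field_simp
      linear_combination (q:ℚ) * (q:ℚ)^k * hBeq


lemma pqD_eq (p q : ℕ) (c : List ℤ) :
    pqVal p q (c.map (fun d => d.toNat)) - pqVal p q (c.map (fun d => (-d).toNat))
      = pqD p q c := by
  induction c with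
  | nil => simp [pqVal, pqD]
  | cons d c ih =>
    have h : ((d.toNat : ℚ)) - (((-d).toNat : ℚ)) = (d : ℚ) := by
      exact_mod_cast congrArg (fun z : ℤ => (z : ℚ)) (Int.toNat_sub_toNat_neg d)
    simp only [List.map_cons, pqVal, pqD]
    linear_combination (1/(q:ℚ)) * h + ((p:ℚ)/(q:ℚ)) * ih

lemma exists_pair_word (p q : ℕ) (hq : 1 < q) (hpq : q < p) (hcop : Nat.Coprime p q)
    (k : ℕ) (B : ℤ) (hB : B.natAbs < q ^ k) :
    ∃ v : List (ℕ × ℕ), (∀ ab ∈ v, ab.1 < p ∧ ab.2 < p) ∧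
      pqVal p q (v.map Prod.fst) - pqVal p q (v.map Prod.snd) = (B : ℚ) / (q : ℚ) ^ k := by
  obtain ⟨c, -, hdig, hval⟩ := exists_digits p q hq hpq hcop k B hB
  refine ⟨c.map (fun d => (d.toNat, (-d).toNat)), ?_, ?_⟩
  · intro ab hab
    rw [List.mem_map] at hab
    obtain ⟨d, hd, rfl⟩ := hab
    have := hdig d hd
    constructor <;> simp <;> omega
  · rw [List.map_map, List.map_map]
    show pqVal p q (c.map (fun d => d.toNat)) - pqVal p q (c.map (fun d => (-d).toNat)) = _
    rw [pqD_eq p q c, hval]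

lemma rat_id (pq qq Bq : ℚ) (n k : ℕ) (hq : qq ≠ 0) :
    1/qq + (pq/qq)^(n+1) * (Bq/qq^k) = (qq^(n+k) + pq^(n+1)*Bq)/qq^(n+1+k) := by
  rw [div_pow]
  field_simp
  ring


/-- the language of pairs of equal-length words over A_p (i.e.
words over A_p × A_p) whose first component evaluates to a smaller value than
the second is not regular. -/
theorem stmt_11 (p q : ℕ) (hq : 1 < q) (hpq : q < p) (hcop : Nat.Coprime p q) :
    ¬ Language.IsRegular
        {w : List (ℕ × ℕ) | (∀ ab ∈ w, ab.1 < p ∧ ab.2 < p) ∧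
          pqVal p q (w.map Prod.fst) < pqVal p q (w.map Prod.snd)} := by
  rintro ⟨σ, fin, M, hM⟩
  have hp1 : 1 < p := hq.trans hpq
  have hqQ : (0:ℚ) < (q:ℚ) := by exact_mod_cast (by omega : 0 < q)
  have hpQ : (0:ℚ) < (p:ℚ) := by exact_mod_cast (by omega : 0 < p)
  set pre : ℕ → List (ℕ × ℕ) := fun n => (1,0) :: List.replicate n (0,0) with hpre
  -- key computation: value of a prefixed word
  have hvalpre : ∀ n : ℕ, ∀ v : List (ℕ × ℕ),
      pqVal p q (((pre n ++ v)).map Prod.fst) - pqVal p q (((pre n ++ v)).map Prod.snd)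
        = 1/(q:ℚ) + ((p:ℚ)/(q:ℚ))^(n+1) *
            (pqVal p q (v.map Prod.fst) - pqVal p q (v.map Prod.snd)) := by
    intro n v
    have h1 : (pre n ++ v).map Prod.fst = (1 :: List.replicate n 0) ++ v.map Prod.fst := by
      simp [hpre]
    have h2 : (pre n ++ v).map Prod.snd = (0 :: List.replicate n 0) ++ v.map Prod.snd := by
      simp [hpre]
    rw [h1, h2, pqVal_append, pqVal_append]
    simp only [List.length_cons, List.length_replicate]
    show (1:ℚ)/q + (p:ℚ)/q * pqVal p q (List.replicate n 0) + _ -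
      ((0:ℚ)/q + (p:ℚ)/q * pqVal p q (List.replicate n 0) + _) = _
    rw [pqVal_replicate_zero]
    ring
  have key : ∀ a b : ℕ, a < b →
      M.evalFrom M.start (pre a) = M.evalFrom M.start (pre b) → False := by
    intro a b hab hf
    obtain ⟨k, hk⟩ := pow_unbounded_of_one_lt (p^(b+1)) hq
    -- integer data
    set dn : ℕ := q^(a+k) / p^(a+1) with hdn
    have hPpos : 0 < p^(a+1) := Nat.pow_pos (by omega)
    have hd1 : dn * p^(a+1) ≤ q^(a+k) := Nat.div_mul_le_self _ _
    have hd2 : q^(a+k) < dn * p^(a+1) + p^(a+1) := by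
      have h := Nat.div_add_mod (q^(a+k)) (p^(a+1))
      have hm := Nat.mod_lt (q^(a+k)) hPpos
      rw [← hdn] at h
      linarith [h, hm]
    have hqa : q^a < p^(a+1) :=
      lt_of_le_of_lt (Nat.pow_le_pow_left hpq.le a) (Nat.pow_lt_pow_right hp1 (Nat.lt_succ_self a))
    have hdlt : dn < q^k := by
      rw [hdn, Nat.div_lt_iff_lt_mul hPpos]
      calc q^(a+k) = q^a * q^k := by rw [pow_add]
        _ < p^(a+1) * q^k := by
            exact Nat.mul_lt_mul_of_lt_of_le hqa (le_refl _) (Nat.pow_pos (by omega))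
        _ = q^k * p^(a+1) := by ring
    set B : ℤ := -(dn : ℤ) with hB
    have hBabs : B.natAbs < q ^ k := by
      rw [hB]; simpa using hdlt
    -- the two integer inequalities
    have Ineq1 : (0:ℚ) ≤ (q:ℚ)^(a+k) + (p:ℚ)^(a+1) * (B:ℚ) := by
      have h1 : ((dn * p^(a+1) : ℕ) : ℚ) ≤ ((q^(a+k) : ℕ) : ℚ) := by exact_mod_cast hd1
      push_cast at h1
      rw [hB]; push_cast; nlinarith [h1]
    have Ineq2 : (q:ℚ)^(b+k) + (p:ℚ)^(b+1) * (B:ℚ) < 0 := by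
      have hd2' : ((q^(a+k) : ℕ) : ℚ) < ((dn * p^(a+1) + p^(a+1) : ℕ) : ℚ) := by exact_mod_cast hd2
      have hk' : ((p^(b+1) : ℕ) : ℚ) < ((q^k : ℕ) : ℚ) := by exact_mod_cast hk
      have hjq : ((q^(b-a) : ℕ) : ℚ) + 1 ≤ ((p^(b-a) : ℕ) : ℚ) := by
        have : q^(b-a) < p^(b-a) := Nat.pow_lt_pow_left hpq (by omega)
        exact_mod_cast this
      push_cast at hd2' hk' hjq
      set P : ℚ := (p:ℚ)^(a+1) with hP
      set N : ℚ := (q:ℚ)^(a+k) with hN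
      set Pj : ℚ := (p:ℚ)^(b-a) with hPj
      set Qj : ℚ := (q:ℚ)^(b-a) with hQj
      have hPPj : (p:ℚ)^(b+1) = P * Pj := by rw [hP, hPj, ← pow_add]; congr 1; omega
      have hNQj : (q:ℚ)^(b+k) = N * Qj := by rw [hN, hQj, ← pow_add]; congr 1; omega
      have hNk : (q:ℚ)^k ≤ N := by
        rw [hN]; exact pow_le_pow_right₀ (by exact_mod_cast hq.le.trans' (by omega)) (by omega)
      have hPjpos : (0:ℚ) < Pj := by rw [hPj]; positivity
      have hNpos : (0:ℚ) < N := by rw [hN]; positivity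
      rw [hPPj, hNQj, hB]
      push_cast
      have h6 : (N - P) * Pj < (dn:ℚ) * P * Pj := by
        have : N - P < (dn:ℚ) * P := by linarith
        nlinarith [this, hPjpos]
      have h7 : N * (Qj + 1) ≤ N * Pj := by nlinarith [hjq, hNpos]
      nlinarith [h6, h7, hNk, hk', hPjpos, hPPj]
    -- build the separating suffix
    obtain ⟨v, hvdig, hvval⟩ := exists_pair_word p q hq hpq hcop k B hBabs
    have hratio : ∀ n : ℕ,
        pqVal p q (((pre n ++ v)).map Prod.fst) - pqVal p q (((pre n ++ v)).map Prod.snd)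
          = ((q:ℚ)^(n+k) + (p:ℚ)^(n+1) * (B:ℚ)) / (q:ℚ)^(n+1+k) := by
      intro n
      rw [hvalpre n v, hvval]
      exact rat_id _ _ _ n k (ne_of_gt hqQ)
    -- membership facts
    have hdigpre : ∀ n : ℕ, ∀ ab ∈ pre n ++ v, ab.1 < p ∧ ab.2 < p := by
      intro n ab hab
      rcases List.mem_append.mp hab with h | h
      · rcases List.mem_cons.mp h with h | h
        · rw [h]; exact ⟨hp1, by omega⟩
        · rw [List.eq_of_mem_replicate h]; exact ⟨by omega, by omega⟩
      · exact hvdig ab h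
    have hmemb : (pre b ++ v) ∈ M.accepts := by
      rw [hM]
      refine ⟨hdigpre b, ?_⟩
      have h := hratio b
      have hlt : pqVal p q ((pre b ++ v).map Prod.fst)
          - pqVal p q ((pre b ++ v).map Prod.snd) < 0 := by
        rw [h]
        exact div_neg_of_neg_of_pos Ineq2 (by positivity)
      linarith
    have hmema : (pre a ++ v) ∈ M.accepts := by
      rw [DFA.mem_accepts] at hmemb ⊢
      have heval : M.eval (pre a ++ v) = M.eval (pre b ++ v) := by
        show M.evalFrom M.start _ = M.evalFrom M.start _
        rw [DFA.evalFrom_of_append, DFA.evalFrom_of_append, hf]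
      rw [heval]
      exact hmemb
    rw [hM] at hmema
    obtain ⟨-, hlt⟩ := hmema
    have h := hratio a
    have : (0:ℚ) ≤ pqVal p q ((pre a ++ v).map Prod.fst) - pqVal p q ((pre a ++ v).map Prod.snd) := by
      rw [h]
      exact div_nonneg Ineq1 (by positivity)
    linarith
  obtain ⟨n, m, hne, hfe⟩ := Finite.exists_ne_map_eq_of_infinite
    (fun n : ℕ => M.evalFrom M.start (pre n))
  rcases hne.lt_or_gt with h | h
  · exact key n m h hfe
  · exact key m n h hfe.symm
end

section
/- For every a, b ∈ A_p and every state s ∈ {0, 1, ..., 1 + ⌊(p−2)/(p−q)⌋}, there is exactly one digit c ∈ A_p and one state s' ∈ {0, ..., 1 + ⌊(p−2)/(p−q)⌋} such that q·s + a + b = p·s' + c. -/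
def maxCarry (p q : ℕ) : ℕ := 1 + (p - 2) / (p - q)

theorem lt_sub_mul_maxCarry {p q : ℕ} (hpq : q < p) : p - 2 < (p - q) * maxCarry p q := by
  rw [maxCarry, add_comm]
  exact Nat.lt_mul_div_succ _ (Nat.sub_pos_of_lt hpq)

theorem carry_le_maxCarry {p q a b s : ℕ} (hpq : q < p) (ha : a < p) (hb : b < p)
    (hs : s ≤ maxCarry p q) : (q * s + a + b) / p ≤ maxCarry p q := by
  rw [← Nat.lt_succ_iff, Nat.div_lt_iff_lt_mul (by omega), Nat.succ_eq_add_one]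
  have hgap := lt_sub_mul_maxCarry hpq
  have hqs : q * s ≤ q * maxCarry p q := Nat.mul_le_mul_left q hs
  have hqp : q * maxCarry p q ≤ p * maxCarry p q := Nat.mul_le_mul_right _ hpq.le
  rw [Nat.sub_mul] at hgap
  rw [add_mul, one_mul, mul_comm _ p]
  omega

theorem existsUnique_eq_mul_add_of_div_le {n p B : ℕ} (hp : 0 < p) (h : n / p ≤ B) :
    ∃! dm : ℕ × ℕ, dm.1 ≤ B ∧ dm.2 < p ∧ n = p * dm.1 + dm.2 := by
  refine ⟨(n / p, n % p), ⟨h, Nat.mod_lt n hp, (Nat.div_add_mod n p).symm⟩, ?_⟩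
  rintro ⟨d, m⟩ ⟨-, hm, rfl⟩
  obtain ⟨hd, hm⟩ := (Nat.div_mod_unique hp).mpr ⟨add_comm m (p * d), hm⟩
  rw [hd, hm]

theorem stmt_17_general (p q : ℕ) (hpq : q < p)
    (a b s : ℕ) (ha : a < p) (hb : b < p) (hs : s ≤ 1 + (p - 2) / (p - q)) :
    ∃! sc : ℕ × ℕ, sc.1 ≤ 1 + (p - 2) / (p - q) ∧ sc.2 < p ∧
      q * s + a + b = p * sc.1 + sc.2 := by
  exact existsUnique_eq_mul_add_of_div_le (by omega) (carry_le_maxCarry hpq ha hb hs)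

/-- the carry automaton for base-p/q addition is deterministic
and complete: for all digits a, b < p and every state
s ≤ 1 + ⌊(p−2)/(p−q)⌋ there are exactly one digit c < p and one state
s' ≤ 1 + ⌊(p−2)/(p−q)⌋ with q·s + a + b = p·s' + c. -/
theorem stmt_17 (p q : ℕ) (hq : 1 < q) (hpq : q < p) (hcop : Nat.Coprime p q)
    (a b s : ℕ) (ha : a < p) (hb : b < p) (hs : s ≤ 1 + (p - 2) / (p - q)) :
    ∃! sc : ℕ × ℕ, sc.1 ≤ 1 + (p - 2) / (p - q) ∧ sc.2 < p ∧
      q * s + a + b = p * sc.1 + sc.2 :=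
  stmt_17_general p q hpq a b s ha hb hs
end

section
/- Correctness of the addition automaton: if u, v, w are words over A_p of equal length k, and reading (u,v,w) right-to-left through the carry automaton with transitions q·s + a + b = p·s' + c starting from state 0 ends in state s, then val(u) + val(v) = val(w) + s·(p/q)^k. In particular the triple is accepted (ends in state 0) iff val(u) + val(v) = val(w). -/
/-- Run of the right-to-left carry automaton for base-p/q addition, on a list
of digit triples given least-significant first: `carryRun p q s l t` holds if
reading l from state s (consuming digits from least significant to most
significant via q·s + a + b = p·s' + c) ends in state t. -/
def carryRun (p q : ℕ) : ℕ → List (ℕ × ℕ × ℕ) → ℕ → Prop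
  | s, [], t => s = t
  | s, (a, b, c) :: l, t => ∃ s' : ℕ, q * s + a + b = p * s' + c ∧
      carryRun p q s' l t

private lemma lemA (p q : ℕ) (hq : 0 < q) :
    ∀ (u v w : List ℕ) (s t : ℕ), v.length = u.length → w.length = u.length →
    carryRun p q s (u.zip (v.zip w)) t →
    pqVal p q u + pqVal p q v + s = pqVal p q w + t * ((p:ℚ)/q)^u.length := by
  have hq0 : (q:ℚ) ≠ 0 := by positivity
  intro u
  induction u with
  | nil => intro v w s t hv hw hr
           simp at hv hw
           subst hv; subst hw
           simp [carryRun] at hr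
           simp [pqVal, hr]
  | cons a u ih =>
    rintro (_|⟨b,v⟩) (_|⟨c,w⟩) s t hv hw hr <;> simp at hv hw
    obtain ⟨s', heq, hrun⟩ := hr
    have IH := ih v w s' t hv hw hrun
    have heqQ : (q:ℚ)*s + a + b = p*s' + c := by exact_mod_cast heq
    have hs : (s:ℚ) = ((p:ℚ)*s' + c - a - b)/q := by
      rw [eq_div_iff hq0]; linarith
    simp only [pqVal, List.length_cons]
    rw [hs]
    linear_combination ((p:ℚ)/q) * IH

private lemma lemB (p q : ℕ) (hq : 0 < q) (u : List ℕ) :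
    ∃ n : ℤ, (q:ℚ)^u.length * pqVal p q u = n := by
  have hq0 : (q:ℚ) ≠ 0 := by positivity
  induction u with
  | nil => exact ⟨0, by simp [pqVal]⟩
  | cons a u ih =>
    obtain ⟨n, hn⟩ := ih
    refine ⟨a * q^u.length + p * n, ?_⟩
    simp only [pqVal, List.length_cons]
    push_cast
    field_simp
    linear_combination ((p:ℚ)*q) * hn

private lemma den_dvd_of_mul_int (x : ℚ) (m : ℤ) (d : ℕ) (hd : (d:ℚ) ≠ 0)
    (h : (d:ℚ) * x = m) : x.den ∣ d := by
  have hx : x = ((m : ℚ) / (d : ℤ)) := by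
    push_cast; rw [eq_div_iff hd]; linarith
  rw [hx, ← Rat.divInt_eq_div]
  exact_mod_cast Rat.den_dvd m d

private lemma lemC (p q : ℕ) (hq : 1 < q) (hpq : q < p) (hcop : Nat.Coprime p q) :
    ∀ (u v w : List ℕ) (s t : ℕ), v.length = u.length → w.length = u.length →
    (∀ c ∈ w, c < p) →
    pqVal p q u + pqVal p q v + s = pqVal p q w + t * ((p:ℚ)/q)^u.length →
    carryRun p q s (u.zip (v.zip w)) t := by
  have hq0 : (q:ℚ) ≠ 0 := by positivity
  have hppos : 0 < p := lt_trans (lt_trans one_pos hq) hpq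
  have hp0 : (p:ℚ) ≠ 0 := by positivity
  intro u
  induction u with
  | nil =>
    intro v w s t hv hw hwlt heq
    simp at hv hw; subst hv; subst hw
    simp [pqVal] at heq
    simp [carryRun]
    exact_mod_cast heq
  | cons a u ih =>
    rintro (_|⟨b,v⟩) (_|⟨c,w⟩) s t hv hw hwlt heq <;> simp at hv hw
    have hclt : c < p := hwlt c List.mem_cons_self
    set U := pqVal p q u with hU
    set V := pqVal p q v with hV
    set W := pqVal p q w with hW
    set x : ℚ := (t:ℚ)*((p:ℚ)/q)^u.length - (U + V - W) with hx
    have heq' : (a:ℚ)/q + (p:ℚ)/q*U + ((b:ℚ)/q + (p:ℚ)/q*V) + s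
        = (c:ℚ)/q + (p:ℚ)/q*W + t * ((p:ℚ)/q)^(u.length+1) := heq
    have hpx : (p:ℚ) * x = q*s + a + b - c := by
      have h2 : (q:ℚ)^2 * ((p:ℚ) * x) = (q:ℚ)^2 * ((q:ℚ)*s + a + b - c) := by
        have ha : (q:ℚ) * ((a:ℚ)/q) = a := mul_div_cancel₀ _ hq0
        have hb : (q:ℚ) * ((b:ℚ)/q) = b := mul_div_cancel₀ _ hq0
        have hc : (q:ℚ) * ((c:ℚ)/q) = c := mul_div_cancel₀ _ hq0
        have hr : (q:ℚ) * ((p:ℚ)/q) = p := mul_div_cancel₀ _ hq0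
        rw [hx]
        linear_combination (q:ℚ)^2 * ((-(q:ℚ))*heq' + ha + hb - hc + (U+V-W)*hr
          - (t:ℚ)*((p:ℚ)/q)^u.length*hr)
      exact mul_left_cancel₀ (pow_ne_zero 2 hq0) h2
    have hd1 : x.den ∣ p := by
      apply den_dvd_of_mul_int x ((q*s+a+b : ℕ) - (c:ℕ) : ℤ) p hp0
      push_cast; linarith [hpx]
    obtain ⟨n, hn⟩ := lemB p q (lt_trans one_pos hq) u
    obtain ⟨n2, hn2⟩ := lemB p q (lt_trans one_pos hq) v
    obtain ⟨n3, hn3⟩ := lemB p q (lt_trans one_pos hq) w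
    rw [hv] at hn2
    rw [hw] at hn3
    have hd2 : x.den ∣ q ^ u.length := by
      apply den_dvd_of_mul_int x ((t:ℤ)*(p:ℤ)^u.length - (n + n2 - n3)) (q^u.length)
        (by positivity)
      have hpow : (q:ℚ)^u.length * ((p:ℚ)/q)^u.length = (p:ℚ)^u.length := by
        rw [div_pow]; field_simp
      rw [hx]
      push_cast
      linear_combination (t:ℚ)*hpow - hn - hn2 + hn3
    have hden : x.den = 1 :=
      Nat.eq_one_of_dvd_one
        ((Nat.Coprime.pow_right u.length hcop) ▸ Nat.dvd_gcd hd1 hd2)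
    have hxint : (x.num : ℚ) = x := Rat.coe_int_num_of_den_eq_one hden
    have hxnonneg : 0 ≤ x.num := by
      by_contra hneg
      push_neg at hneg
      have hx1 : x ≤ -1 := by
        rw [← hxint]
        exact_mod_cast Int.le_of_lt_add_one (by omega : x.num < -1 + 1) |>.trans_eq rfl
      have : (p:ℚ) * x ≤ -p := by nlinarith [hp0, (by positivity : (0:ℚ) < (p:ℚ))]
      have hc : (c:ℚ) < p := by exact_mod_cast hclt
      nlinarith [hpx]
    set s' : ℕ := x.num.toNat with hs'
    have hs'x : (s' : ℚ) = x := by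
      rw [hs']; rw [← hxint]; congr 1; exact_mod_cast Int.toNat_of_nonneg hxnonneg
    refine ⟨s', ?_, ?_⟩
    · have : ((q*s+a+b : ℕ) : ℚ) = ((p*s'+c : ℕ) : ℚ) := by
        push_cast; rw [hs'x]; linarith [hpx]
      exact_mod_cast this
    · apply ih v w s' t hv hw (fun d hd => hwlt d (List.mem_cons_of_mem c hd))
      rw [hs'x, hx]
      ring

/-- correctness of the addition automaton: if reading the triple
(u,v,w) of equal-length words right-to-left from state 0 ends in state s, then
val(u) + val(v) = val(w) + s·(p/q)^k; in particular the run from 0 ends in the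
final state 0 iff val(u) + val(v) = val(w). -/
theorem stmt_18 (p q : ℕ) (hq : 1 < q) (hpq : q < p) (hcop : Nat.Coprime p q)
    (k : ℕ) (u v w : List ℕ)
    (hu : ∀ a ∈ u, a < p) (hv : ∀ a ∈ v, a < p) (hw : ∀ a ∈ w, a < p)
    (hku : u.length = k) (hkv : v.length = k) (hkw : w.length = k) :
    (∀ s : ℕ, carryRun p q 0 (u.zip (v.zip w)) s →
        pqVal p q u + pqVal p q v = pqVal p q w + (s : ℚ) * ((p : ℚ) / q) ^ k) ∧
      (carryRun p q 0 (u.zip (v.zip w)) 0 ↔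
        pqVal p q u + pqVal p q v = pqVal p q w) := by
  have hq1 : 0 < q := lt_trans one_pos hq
  have kv : v.length = u.length := hkv.trans hku.symm
  have kw : w.length = u.length := hkw.trans hku.symm
  have part1 : ∀ s : ℕ, carryRun p q 0 (u.zip (v.zip w)) s →
      pqVal p q u + pqVal p q v = pqVal p q w + (s : ℚ) * ((p : ℚ) / q) ^ k := by
    intro s hr
    have h := lemA p q hq1 u v w 0 s kv kw hr
    rw [hku] at h
    push_cast at h
    linarith
  refine ⟨part1, ?_, ?_⟩
  · intro hr
    have h := part1 0 hr
    simpa using h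
  · intro he
    apply lemC p q hq hpq hcop u v w 0 0 kv kw hw
    rw [hku]
    push_cast
    simpa using he
end
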